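/- arXiv:1612.01592 — 6 statements merged into one kernel-verified Lean document; each statement's English description precedes it below -/
import Mathlib

section
/- Let r : (0,∞) → (0,∞) be decreasing and differentiable with r'(x) ≥ -c·r(x)² for all x ≥ x₀, where c > 0. Then for every h > 0 and every x ≥ x₀, r(x + h/r(x)) ≥ r(x)/(1 + c·h). -/
/-- If `r : (0,∞) → (0,∞)` is decreasing and differentiable with
`0 ≥ r' y ≥ -c * r(y)^2` for `y ≥ x₀`, then for every `h > 0` and `x ≥ x₀`,
`r (x + h / r x) ≥ r x / (1 + c * h)`. -/
theorem stmt0 (r : ℝ → ℝ) (c x₀ : ℝ) (hc : 0 < c) (hx₀ : 0 < x₀)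
    (hpos : ∀ x, 0 < x → 0 < r x)
    (hanti : AntitoneOn r (Set.Ioi (0 : ℝ)))
    (hdiff : ∀ x, 0 < x → DifferentiableAt ℝ r x)
    (hderiv_le : ∀ y, x₀ ≤ y → deriv r y ≤ 0)
    (hderiv_ge : ∀ y, x₀ ≤ y → -c * (r y) ^ 2 ≤ deriv r y)
    (h x : ℝ) (hh : 0 < h) (hx : x₀ ≤ x) :
    r x / (1 + c * h) ≤ r (x + h / r x) := by
  have hx0 : (0 : ℝ) < x := lt_of_lt_of_le hx₀ hx
  have hrx : 0 < r x := hpos x hx0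
  set b := x + h / r x with hb
  have hxb : x < b := by
    have : 0 < h / r x := div_pos hh hrx
    simp [hb]; linarith
  have hb0 : 0 < b := lt_trans hx0 hxb
  -- g = 1/r has derivative -r'/r², which is ≤ c on [x₀, ∞)
  set g : ℝ → ℝ := fun y => (r y)⁻¹ with hg
  have hgd : ∀ y, 0 < y → HasDerivAt g (-(deriv r y) / (r y) ^ 2) y := by
    intro y hy
    exact ((hdiff y hy).hasDerivAt).inv (ne_of_gt (hpos y hy))
  have hcont : ContinuousOn g (Set.Icc x b) := by
    intro y hy
    have hy0 : 0 < y := lt_of_lt_of_le hx0 hy.1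
    exact ((hgd y hy0).differentiableAt.continuousAt).continuousWithinAt
  have hdiffg : DifferentiableOn ℝ g (Set.Ioo x b) := by
    intro y hy
    have hy0 : 0 < y := lt_trans hx0 hy.1
    exact ((hgd y hy0).differentiableAt).differentiableWithinAt
  obtain ⟨ξ, hξ, hslope⟩ := exists_deriv_eq_slope g hxb hcont hdiffg
  have hξ0 : 0 < ξ := lt_trans hx0 hξ.1
  have hξx₀ : x₀ ≤ ξ := le_of_lt (lt_of_le_of_lt hx hξ.1)
  have hrξ : 0 < r ξ := hpos ξ hξ0
  have hderivξ : deriv g ξ = -(deriv r ξ) / (r ξ) ^ 2 := (hgd ξ hξ0).deriv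
  have hle : deriv g ξ ≤ c := by
    rw [hderivξ, div_le_iff₀ (by positivity)]
    have := hderiv_ge ξ hξx₀
    nlinarith
  have hslope' : (g b - g x) / (b - x) ≤ c := by rw [← hslope]; exact hle
  have hbx : b - x = h / r x := by simp [hb]
  have key : g b ≤ g x + c * (h / r x) := by
    rw [div_le_iff₀ (by linarith)] at hslope'
    rw [hbx] at hslope'
    linarith
  have hrb : 0 < r b := hpos b hb0
  have hgx : g x = (r x)⁻¹ := rfl
  have hgb : g b = (r b)⁻¹ := rfl
  rw [hgb, hgx] at key
  have h1 : (r b)⁻¹ ≤ (1 + c * h) / r x := by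
    rw [add_div]
    have : c * (h / r x) = c * h / r x := by ring
    rw [this] at key
    simpa using key
  have hch : 0 < 1 + c * h := by positivity
  rw [div_le_iff₀ hch]
  rw [inv_le_iff_one_le_mul₀ hrb] at h1
  calc r x = r x * 1 := by ring
    _ ≤ r x * ((1 + c * h) / r x * r b) := by
        exact mul_le_mul_of_nonneg_left h1 (le_of_lt hrx)
    _ = r b * (1 + c * h) := by field_simp
end

section
/- Let r : (0,∞) → (0,∞) be decreasing and differentiable with 0 ≥ r'(y) ≥ -c·r(y)² for all y ≥ x₀ (c > 0), and let R(x) = ∫₀ˣ r(y) dy. Then for every h > 0 and x ≥ x₀: R(x) + h/(1+c·h) ≤ R(x + h/r(x)) ≤ R(x) + h. -/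
/-- If `r : (0,∞) → (0,∞)` is decreasing and differentiable with
`0 ≥ r' y ≥ -c * r(y)^2` for `y ≥ x₀`, and `R x = ∫₀ˣ r`, then for every `h > 0`
and `x ≥ x₀`: `R x + h/(1+c*h) ≤ R (x + h / r x) ≤ R x + h`. -/
theorem stmt1 (r : ℝ → ℝ) (c x₀ : ℝ) (hc : 0 < c) (hx₀ : 0 < x₀)
    (hpos : ∀ x, 0 < x → 0 < r x)
    (hanti : AntitoneOn r (Set.Ioi (0 : ℝ)))
    (hdiff : ∀ x, 0 < x → DifferentiableAt ℝ r x)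
    (hderiv_le : ∀ y, x₀ ≤ y → deriv r y ≤ 0)
    (hderiv_ge : ∀ y, x₀ ≤ y → -c * (r y) ^ 2 ≤ deriv r y)
    (hloc : ∀ x : ℝ, IntervalIntegrable r MeasureTheory.volume 0 x)
    (R : ℝ → ℝ) (hR : ∀ x, R x = ∫ y in (0 : ℝ)..x, r y)
    (h x : ℝ) (hh : 0 < h) (hx : x₀ ≤ x) :
    R x + h / (1 + c * h) ≤ R (x + h / r x) ∧ R (x + h / r x) ≤ R x + h := by
  have hx0 : (0:ℝ) < x := lt_of_lt_of_le hx₀ hx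
  have hrx : 0 < r x := hpos x hx0
  set δ := h / r x with hδdef
  have hδ : 0 < δ := div_pos hh hrx
  have hδrx : δ * r x = h := div_mul_cancel₀ h (ne_of_gt hrx)
  have hint : IntervalIntegrable r MeasureTheory.volume x (x + δ) :=
    (hloc x).symm.trans (hloc (x + δ))
  have hsplit : R (x + δ) = R x + ∫ y in x..(x+δ), r y := by
    rw [hR, hR, ← intervalIntegral.integral_add_adjacent_intervals (hloc x) hint]
  have hch : (0:ℝ) < 1 + c * h := by positivity
  have hmem : ∀ y ∈ Set.Icc x (x+δ), 0 < y :=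
    fun y hy => lt_of_lt_of_le hx0 hy.1
  -- pointwise upper bound
  have hupper : ∀ y ∈ Set.Icc x (x+δ), r y ≤ r x := fun y hy =>
    hanti (Set.mem_Ioi.mpr hx0) (Set.mem_Ioi.mpr (hmem y hy)) hy.1
  -- auxiliary function g y = c*y - (r y)⁻¹ is monotone on [x, x+δ]
  set g : ℝ → ℝ := fun y => c * y - (r y)⁻¹ with hg
  have hgdiff : ∀ y ∈ Set.Icc x (x+δ), DifferentiableAt ℝ g y := by
    intro y hy
    have hy0 := hmem y hy
    exact (differentiableAt_id.const_mul c).sub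
      ((hdiff y hy0).inv (ne_of_gt (hpos y hy0)))
  have hgmono : MonotoneOn g (Set.Icc x (x+δ)) := by
    apply monotoneOn_of_deriv_nonneg (convex_Icc _ _)
    · exact fun y hy => (hgdiff y hy).continuousAt.continuousWithinAt
    · intro y hy
      rw [interior_Icc] at hy
      exact (hgdiff y (Set.mem_Icc_of_Ioo hy)).differentiableWithinAt
    · intro y hy
      rw [interior_Icc] at hy
      have hy0 : 0 < y := lt_trans hx0 hy.1
      have hyx₀ : x₀ ≤ y := le_of_lt (lt_of_le_of_lt hx hy.1)
      have hry : 0 < r y := hpos y hy0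
      have hdinv : deriv (fun z => (r z)⁻¹) y = -deriv r y / (r y) ^ 2 :=
        deriv_inv'' (hdiff y hy0) (ne_of_gt hry)
      have H1 : HasDerivAt (fun z : ℝ => c * z) c y := by
        simpa using (hasDerivAt_id y).const_mul c
      have H : HasDerivAt g (c - -deriv r y / (r y) ^ 2) y :=
        H1.sub (((hdiff y hy0).hasDerivAt).inv (ne_of_gt hry))
      have : deriv g y = c - -deriv r y / (r y) ^ 2 := H.deriv
      rw [this]
      have h2 : -deriv r y ≤ c * (r y) ^ 2 := by nlinarith [hderiv_ge y hyx₀]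
      have h3 : -deriv r y / (r y) ^ 2 ≤ c := by
        rw [div_le_iff₀ (by positivity)]
        linarith
      linarith
  -- pointwise lower bound
  have hlow : ∀ y ∈ Set.Icc x (x+δ), r x / (1 + c * h) ≤ r y := by
    intro y hy
    have hy0 := hmem y hy
    have hry : 0 < r y := hpos y hy0
    have hgle : g x ≤ g y := hgmono (Set.left_mem_Icc.mpr (by linarith)) hy hy.1
    have hinv : (r y)⁻¹ ≤ (r x)⁻¹ + c * δ := by
      have : c * x - (r x)⁻¹ ≤ c * y - (r y)⁻¹ := hgle
      have hyb : y ≤ x + δ := hy.2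
      nlinarith
    rw [div_le_iff₀ hch]
    have e1 : (r y)⁻¹ * r y = 1 := inv_mul_cancel₀ (ne_of_gt hry)
    have e2 : (r x)⁻¹ * r x = 1 := inv_mul_cancel₀ (ne_of_gt hrx)
    have h5 : (r y)⁻¹ * (r y * r x) ≤ ((r x)⁻¹ + c * δ) * (r y * r x) :=
      mul_le_mul_of_nonneg_right hinv (le_of_lt (mul_pos hry hrx))
    have lhs5 : (r y)⁻¹ * (r y * r x) = r x := by rw [← mul_assoc, e1, one_mul]
    have rhs5 : ((r x)⁻¹ + c * δ) * (r y * r x)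
        = r y * ((r x)⁻¹ * r x) + c * (δ * r x) * r y := by ring
    rw [lhs5, rhs5, e2, hδrx] at h5
    linarith
  -- integral bounds
  have hIub : (∫ y in x..(x+δ), r y) ≤ h := by
    calc (∫ y in x..(x+δ), r y) ≤ ∫ _ in x..(x+δ), r x :=
          intervalIntegral.integral_mono_on (by linarith) hint
            intervalIntegrable_const hupper
      _ = δ * r x := by rw [intervalIntegral.integral_const]; simp
      _ = h := hδrx
  have hIlb : h / (1 + c * h) ≤ ∫ y in x..(x+δ), r y := by
    calc h / (1 + c * h) = δ * (r x / (1 + c * h)) := by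
          rw [← hδrx]; ring
      _ = ∫ _ in x..(x+δ), r x / (1 + c * h) := by
          rw [intervalIntegral.integral_const]; simp
      _ ≤ ∫ y in x..(x+δ), r y :=
          intervalIntegral.integral_mono_on (by linarith)
            intervalIntegrable_const hint hlow
  constructor
  · rw [hsplit]; linarith
  · rw [hsplit]; linarith
end

section
/- Let X_n be a Markov chain on ℝ≥0 with transition kernel P and invariant probability distribution π. Let V ≥ 0 be a measurable function that is bounded on bounded sets, and let v(x) := E[V(X₁) - V(X₀) | X₀ = x] be its mean drift (assumed well-defined for π-almost every x). If ∫ v⁺(x) π(dx) < ∞, then ∫ v(x) π(dx) ≥ 0. -/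
open MeasureTheory ProbabilityTheory Filter
open scoped NNReal ENNReal Topology

/-- Equilibrium identity: if `π` is invariant for the Markov kernel `P` on `ℝ≥0`,
`V ≥ 0` is measurable and bounded on bounded sets, `v x = E[V(X₁) - V(X₀) | X₀ = x]`
is well defined, and `∫ v⁺ dπ < ∞`, then `∫ v dπ ≥ 0`, i.e. the `π`-integral of the
negative part of `v` is at most that of its positive part. -/
theorem stmt7 (P : Kernel ℝ≥0 ℝ≥0) [IsMarkovKernel P]
    (π : Measure ℝ≥0) [IsProbabilityMeasure π]
    (hinv : π.bind (fun x => P x) = π)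
    (V : ℝ≥0 → ℝ) (hVmeas : Measurable V) (hVnonneg : ∀ x, 0 ≤ V x)
    (hVbdd : ∀ M : ℝ≥0, ∃ C : ℝ, ∀ x ≤ M, V x ≤ C)
    (hVint : ∀ x, Integrable V (P x))
    (v : ℝ≥0 → ℝ) (hv : ∀ x, v x = (∫ y, V y ∂(P x)) - V x)
    (hfin : ∫⁻ x, ENNReal.ofReal (v x) ∂π < ⊤) :
    ∫⁻ x, ENNReal.ofReal (-v x) ∂π ≤ ∫⁻ x, ENNReal.ofReal (v x) ∂π := by
  classical
  -- truncation of V at level n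
  set W : ℕ → ℝ≥0 → ℝ := fun n y => min (V y) n with hWdef
  have hWmeas : ∀ n, Measurable (W n) := fun n => hVmeas.min measurable_const
  have hWnonneg : ∀ n y, 0 ≤ W n y := fun n y => le_min (hVnonneg y) (Nat.cast_nonneg n)
  have hWle : ∀ n y, W n y ≤ (n : ℝ) := fun n y => min_le_right _ _
  have hWleV : ∀ n y, W n y ≤ V y := fun n y => min_le_left _ _
  -- integrability of W n under any probability measure
  have hWint : ∀ (n : ℕ) (μ : Measure ℝ≥0), IsProbabilityMeasure μ → Integrable (W n) μ := by
    intro n μ hμ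
    refine Integrable.mono' (integrable_const (n : ℝ)) (hWmeas n).aestronglyMeasurable ?_
    filter_upwards with y
    rw [Real.norm_eq_abs, abs_of_nonneg (hWnonneg n y)]
    exact hWle n y
  -- the lintegral version of the truncated kernel integral
  set gE : ℕ → ℝ≥0 → ℝ≥0∞ := fun n x => ∫⁻ y, ENNReal.ofReal (W n y) ∂(P x) with hgEdef
  have hgEmeas : ∀ n, Measurable (gE n) := fun n =>
    Measurable.lintegral_kernel (ENNReal.measurable_ofReal.comp (hWmeas n))
  have hgEle : ∀ n x, gE n x ≤ ENNReal.ofReal (n : ℝ) := by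
    intro n x
    calc gE n x ≤ ∫⁻ _, ENNReal.ofReal (n : ℝ) ∂(P x) :=
          lintegral_mono fun y => ENNReal.ofReal_le_ofReal (hWle n y)
      _ = ENNReal.ofReal (n : ℝ) := by simp
  have hgEne : ∀ n x, gE n x ≠ ⊤ :=
    fun n x => ((hgEle n x).trans_lt ENNReal.ofReal_lt_top).ne
  -- the real integral of the truncation under the kernel
  set g : ℕ → ℝ≥0 → ℝ := fun n x => ∫ y, W n y ∂(P x) with hgdef
  have hg_eq : ∀ n x, g n x = (gE n x).toReal := by
    intro n x
    exact integral_eq_lintegral_of_nonneg_ae (Eventually.of_forall (hWnonneg n))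
      (hWmeas n).aestronglyMeasurable
  have hgmeas : ∀ n, Measurable (g n) := by
    intro n
    have he : g n = fun x => (gE n x).toReal := funext (hg_eq n)
    rw [he]
    exact (hgEmeas n).ennreal_toReal
  have hgnonneg : ∀ n x, 0 ≤ g n x := by
    intro n x; rw [hg_eq]; exact ENNReal.toReal_nonneg
  have hgle : ∀ n x, g n x ≤ (n : ℝ) := by
    intro n x
    rw [hg_eq]
    calc (gE n x).toReal ≤ (ENNReal.ofReal (n : ℝ)).toReal :=
          ENNReal.toReal_mono ENNReal.ofReal_ne_top (hgEle n x)
      _ = (n : ℝ) := ENNReal.toReal_ofReal (Nat.cast_nonneg n)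
  have hofReal_g : ∀ n x, ENNReal.ofReal (g n x) = gE n x := by
    intro n x
    rw [hg_eq, ENNReal.ofReal_toReal (hgEne n x)]
  -- invariance at the lintegral level
  have hinvW : ∀ n, ∫⁻ x, gE n x ∂π = ∫⁻ y, ENNReal.ofReal (W n y) ∂π := by
    intro n
    conv_rhs => rw [← hinv]
    exact (Measure.lintegral_bind P.measurable.aemeasurable
      (ENNReal.measurable_ofReal.comp (hWmeas n)).aemeasurable).symm
  -- real-integral version of invariance for truncations
  have hgint : ∀ n, Integrable (g n) π := by
    intro n
    refine Integrable.mono' (integrable_const (n : ℝ)) (hgmeas n).aestronglyMeasurable ?_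
    filter_upwards with x
    rw [Real.norm_eq_abs, abs_of_nonneg (hgnonneg n x)]
    exact hgle n x
  have hint_eq : ∀ n, ∫ x, g n x ∂π = ∫ y, W n y ∂π := by
    intro n
    rw [integral_eq_lintegral_of_nonneg_ae (Eventually.of_forall (hgnonneg n))
        (hgmeas n).aestronglyMeasurable,
      integral_eq_lintegral_of_nonneg_ae (Eventually.of_forall (hWnonneg n))
        (hWmeas n).aestronglyMeasurable]
    congr 1
    calc ∫⁻ x, ENNReal.ofReal (g n x) ∂π = ∫⁻ x, gE n x ∂π := by
          simp_rw [hofReal_g]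
      _ = ∫⁻ y, ENNReal.ofReal (W n y) ∂π := hinvW n
  -- the truncated drift
  set u : ℕ → ℝ≥0 → ℝ := fun n x => g n x - W n x with hudef
  have huint : ∀ n, Integrable (u n) π := fun n => (hgint n).sub (hWint n π inferInstance)
  have huzero : ∀ n, ∫ x, u n x ∂π = 0 := by
    intro n
    rw [hudef]
    simp only
    rw [integral_sub (hgint n) (hWint n π inferInstance), hint_eq n, sub_self]
  -- positive and negative parts of the truncated drift balance
  have hNP : ∀ n, ∫⁻ x, ENNReal.ofReal (-(u n x)) ∂π = ∫⁻ x, ENNReal.ofReal (u n x) ∂π := by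
    intro n
    have h := integral_eq_lintegral_pos_part_sub_lintegral_neg_part (huint n)
    rw [huzero n] at h
    have hA : ∫⁻ x, ENNReal.ofReal (u n x) ∂π ≠ ⊤ := by
      refine ((lintegral_mono fun x => ?_).trans_lt (huint n).2).ne
      calc ENNReal.ofReal (u n x) ≤ ENNReal.ofReal ‖u n x‖ :=
            ENNReal.ofReal_le_ofReal (le_abs_self _)
        _ = ‖u n x‖ₑ := ofReal_norm _
    have hB : ∫⁻ x, ENNReal.ofReal (-(u n x)) ∂π ≠ ⊤ := by
      refine ((lintegral_mono fun x => ?_).trans_lt (huint n).2).ne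
      calc ENNReal.ofReal (-(u n x)) ≤ ENNReal.ofReal ‖u n x‖ := by
            refine ENNReal.ofReal_le_ofReal ?_
            rw [Real.norm_eq_abs]
            exact neg_le_abs _
        _ = ‖u n x‖ₑ := ofReal_norm _
    have htr : (∫⁻ x, ENNReal.ofReal (u n x) ∂π).toReal
        = (∫⁻ x, ENNReal.ofReal (-(u n x)) ∂π).toReal := by linarith
    exact (ENNReal.toReal_eq_toReal_iff' hB hA).mp htr.symm
  -- positive part of truncated drift is dominated by positive part of v
  have hdom : ∀ n x, ENNReal.ofReal (u n x) ≤ ENNReal.ofReal (v x) := by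
    intro n x
    by_cases hx : V x ≤ (n : ℝ)
    · have hW : W n x = V x := min_eq_left hx
      have hgV : g n x ≤ ∫ y, V y ∂(P x) :=
        integral_mono (hWint n (P x) inferInstance) (hVint x) (hWleV n)
      refine ENNReal.ofReal_le_ofReal ?_
      rw [hudef, hv x]
      simp only
      rw [hW]
      linarith
    · have hW : W n x = (n : ℝ) := min_eq_right (le_of_not_ge hx)
      have hle0 : u n x ≤ 0 := by
        rw [hudef]; simp only
        rw [hW]
        linarith [hgle n x]
      rw [ENNReal.ofReal_eq_zero.mpr hle0]
      exact zero_le'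
  -- pointwise convergence of the truncated drift to v
  have htend : ∀ x, Tendsto (fun n => u n x) atTop (𝓝 (v x)) := by
    intro x
    rw [hv x]
    refine Tendsto.sub ?_ ?_
    · -- g n x → ∫ V d(P x)
      refine integral_tendsto_of_tendsto_of_monotone
        (fun n => hWint n (P x) inferInstance) (hVint x) ?_ ?_
      · filter_upwards with y m k hmk
        exact min_le_min le_rfl (Nat.cast_le.mpr hmk)
      · filter_upwards with y
        refine tendsto_const_nhds.congr' ?_
        filter_upwards [eventually_ge_atTop ⌈V y⌉₊] with n hn
        exact (min_eq_left ((Nat.le_ceil (V y)).trans (Nat.cast_le.mpr hn))).symm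
    · -- W n x → V x
      refine tendsto_const_nhds.congr' ?_
      filter_upwards [eventually_ge_atTop ⌈V x⌉₊] with n hn
      exact (min_eq_left ((Nat.le_ceil (V x)).trans (Nat.cast_le.mpr hn))).symm
  -- conclude via Fatou
  have humeas : ∀ n, Measurable fun x => ENNReal.ofReal (-(u n x)) := by
    intro n
    exact ENNReal.measurable_ofReal.comp ((hgmeas n).sub (hWmeas n)).neg
  calc ∫⁻ x, ENNReal.ofReal (-v x) ∂π
      = ∫⁻ x, liminf (fun n => ENNReal.ofReal (-(u n x))) atTop ∂π := by
        refine lintegral_congr fun x => ?_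
        have hT : Tendsto (fun n => ENNReal.ofReal (-(u n x))) atTop
            (𝓝 (ENNReal.ofReal (-v x))) :=
          (ENNReal.continuous_ofReal.tendsto _).comp (htend x).neg
        exact hT.liminf_eq.symm
    _ ≤ liminf (fun n => ∫⁻ x, ENNReal.ofReal (-(u n x)) ∂π) atTop :=
        lintegral_liminf_le humeas
    _ = liminf (fun n => ∫⁻ x, ENNReal.ofReal (u n x) ∂π) atTop := by
        congr 1; funext n; exact hNP n
    _ ≤ ∫⁻ x, ENNReal.ofReal (v x) ∂π := by
        refine liminf_le_of_le (by isBoundedDefault) ?_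
        intro b hb
        rcases hb.exists with ⟨n, hn⟩
        exact hn.trans (lintegral_mono fun x => hdom n x)
end

section
/- Let X_n be a Markov chain on ℝ with jumps ξ(x) (the increment from state x). Suppose there exist A > 0 and ε > 0 such that E[min(ξ(x), A)] ≥ ε for all x ∈ ℝ. Fix x ∈ ℝ, h > 0, let the chain start at X₀ ∈ (x, x+h], and set T := min{n ≥ 1 : X_n > x+h}. Then E[T] ≤ (A+h)/ε. -/
/-!
The function `V w = (x + h + A - w)⁺` is a Lyapunov function for the chain killed on leaving
`(-∞, x + h]`. From any `z ≤ x + h` one has `V(w) ≤ V(z) - min(w - z, A)` with the right-hand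
side nonnegative, so the drift hypothesis gives `E_z[V(X₁)] + ε ≤ V(z)`. Since the killed chain
lives in `(-∞, x + h]`, integrating against its `n`-step law gives
`E_y[V(X_{n+1}); T > n+1] + ε P_y(T > n) ≤ E_y[V(X_n); T > n]`, and telescoping yields
`ε E_y[T] ≤ V(y) ≤ A + h`.
-/

open MeasureTheory ProbabilityTheory
open scoped ENNReal

/-- `kIter0 K n` is the `n`-fold composition `Kⁿ` of the kernel `K`
(with `K⁰` the identity kernel). -/
noncomputable def kIter0 (K : Kernel ℝ ℝ) : ℕ → Kernel ℝ ℝ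
  | 0 => Kernel.id
  | n + 1 => (kIter0 K n) ∘ₖ K

lemma ENNReal.tsum_le_of_succ_add_le {a L : ℕ → ℝ≥0∞} (h : ∀ n, L (n + 1) + a n ≤ L n) :
    ∑' n, a n ≤ L 0 := by
  have hpartial : ∀ N, ∑ n ∈ Finset.range N, a n + L N ≤ L 0 := by
    intro N
    induction N with
    | zero => simp
    | succ N ih =>
      calc ∑ n ∈ Finset.range (N + 1), a n + L (N + 1)
          = ∑ n ∈ Finset.range N, a n + (L (N + 1) + a N) := by
            rw [Finset.sum_range_succ, add_assoc, add_comm (a N)]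
        _ ≤ L 0 := (add_le_add_right (h N) _).trans ih
  exact ENNReal.tsum_le_of_sum_range_le fun N => le_self_add.trans (hpartial N)

lemma kIter0_succ_eq_comp (K : Kernel ℝ ℝ) (n : ℕ) : kIter0 K (n + 1) = K ∘ₖ kIter0 K n := by
  induction n with
  | zero => exact (Kernel.id_comp K).trans (Kernel.comp_id K).symm
  | succ n ih =>
    calc kIter0 K (n + 2) = (K ∘ₖ kIter0 K n) ∘ₖ K := congrArg (· ∘ₖ K) ih
      _ = K ∘ₖ kIter0 K (n + 1) := Kernel.comp_assoc K (kIter0 K n) K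

section Restrict

variable {S : Set ℝ} (hS : MeasurableSet S) (P : Kernel ℝ ℝ)

lemma ae_mem_kIter0_restrict {y : ℝ} (hy : y ∈ S) (n : ℕ) :
    ∀ᵐ z ∂kIter0 (P.restrict hS) n y, z ∈ S := by
  cases n with
  | zero => exact (ae_dirac_iff hS).2 hy
  | succ n =>
    rw [ae_iff, kIter0_succ_eq_comp, ← Set.compl_def, Kernel.comp_apply' _ _ _ hS.compl]
    simp [Kernel.restrict_apply' _ _ _ hS.compl]

/-- Foster–Lyapunov bound on the expected exit time from `S`. -/
theorem mul_tsum_kIter0_restrict_le {V : ℝ → ℝ≥0∞} (hV : Measurable V) {δ : ℝ≥0∞}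
    (hdrift : ∀ z ∈ S, ∫⁻ w in S, V w ∂P z + δ ≤ V z) {y : ℝ} (hy : y ∈ S) :
    δ * ∑' n, kIter0 (P.restrict hS) n y Set.univ ≤ V y := by
  rw [← ENNReal.tsum_mul_left]
  refine (ENNReal.tsum_le_of_succ_add_le
    (L := fun n => ∫⁻ z, V z ∂kIter0 (P.restrict hS) n y) fun n => ?_).trans ?_
  · rw [kIter0_succ_eq_comp, Kernel.lintegral_comp _ _ _ hV, ← lintegral_const,
      ← lintegral_add_right _ measurable_const]
    refine lintegral_mono_ae ?_
    filter_upwards [ae_mem_kIter0_restrict hS P hy n] with z hz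
    rw [Kernel.restrict_apply]
    exact hdrift z hz
  · exact (lintegral_dirac y V).le

end Restrict

lemma lintegral_ofReal_sub_add_le_of_drift {ν : Measure ℝ} [IsProbabilityMeasure ν]
    {A ε c z : ℝ} (hε : 0 ≤ ε) (hz : A ≤ c - z) (hint : Integrable (fun w => min (w - z) A) ν)
    (hdrift : ε ≤ ∫ w, min (w - z) A ∂ν) :
    ∫⁻ w, ENNReal.ofReal (c - w) ∂ν + ENNReal.ofReal ε ≤ ENNReal.ofReal (c - z) := by
  have hεA : ε ≤ A := hdrift.trans <| (integral_mono hint (integrable_const A)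
    fun w => min_le_right _ _).trans_eq (by simp)
  have hbound : ∫⁻ w, ENNReal.ofReal (c - w) ∂ν ≤ ENNReal.ofReal (c - z - ε) :=
    calc ∫⁻ w, ENNReal.ofReal (c - w) ∂ν
        ≤ ∫⁻ w, ENNReal.ofReal (c - z - min (w - z) A) ∂ν :=
          lintegral_mono fun w => ENNReal.ofReal_le_ofReal (by linarith [min_le_left (w - z) A])
      _ = ENNReal.ofReal (∫ w, c - z - min (w - z) A ∂ν) :=
          (ofReal_integral_eq_lintegral_ofReal ((integrable_const _).sub hint)
            (ae_of_all _ fun w => show 0 ≤ c - z - min (w - z) A by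
              linarith [min_le_right (w - z) A])).symm
      _ ≤ ENNReal.ofReal (c - z - ε) := by
          gcongr
          rw [integral_sub (integrable_const _) hint]
          simp only [integral_const, probReal_univ, smul_eq_mul, one_mul]
          linarith
  calc ∫⁻ w, ENNReal.ofReal (c - w) ∂ν + ENNReal.ofReal ε
      ≤ ENNReal.ofReal (c - z - ε) + ENNReal.ofReal ε := add_le_add_left hbound _
    _ = ENNReal.ofReal (c - z) := by
      rw [← ENNReal.ofReal_add (by linarith) hε, sub_add_cancel]

theorem stmt10_general (P : Kernel ℝ ℝ) [IsMarkovKernel P]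
    (A ε x h : ℝ) (hε : 0 < ε)
    (hdrift_int : ∀ z : ℝ, Integrable (fun y => min (y - z) A) (P z))
    (hdrift : ∀ z : ℝ, ε ≤ ∫ y, min (y - z) A ∂(P z))
    (y : ℝ) (hy : y ∈ Set.Ioc x (x + h)) :
    ∑' n : ℕ,
        (kIter0 (P.restrict (measurableSet_Iic : MeasurableSet (Set.Iic (x + h)))) n) y
          Set.univ
      ≤ ENNReal.ofReal ((A + h) / ε) := by
  have hfoster := mul_tsum_kIter0_restrict_le measurableSet_Iic P
    (V := fun w => ENNReal.ofReal (x + h + A - w)) (by fun_prop) (δ := ENNReal.ofReal ε)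
    (fun z hz => (add_le_add_left (setLIntegral_le_lintegral _ _) _).trans <|
      lintegral_ofReal_sub_add_le_of_drift hε.le (by linarith [Set.mem_Iic.1 hz])
        (hdrift_int z) (hdrift z)) hy.2
  rw [ENNReal.ofReal_div_of_pos hε, ENNReal.le_div_iff_mul_le
    (Or.inl (ENNReal.ofReal_pos.2 hε).ne') (Or.inl ENNReal.ofReal_ne_top), mul_comm]
  exact hfoster.trans (ENNReal.ofReal_le_ofReal (by linarith [hy.1]))

/-- For a Markov chain with kernel `P` on `ℝ` whose jumps `ξ(z)` satisfy
`E[min(ξ(z), A)] ≥ ε` for all `z`, started at `y ∈ (x, x+h]`, the first time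
`T = min{n ≥ 1 : X_n > x+h}` satisfies `E[T] ≤ (A+h)/ε`.  Here
`E_y[T] = Σ_{n≥0} P_y{T > n}`, and `P_y{T > n} = P_y{X_1 ≤ x+h, …, X_n ≤ x+h}`
is the total mass at `y` of the `n`-th power of the kernel `P` restricted to
`(-∞, x+h]`. -/
theorem stmt10 (P : Kernel ℝ ℝ) [IsMarkovKernel P]
    (A ε x h : ℝ) (hA : 0 < A) (hε : 0 < ε) (hh : 0 < h)
    (hdrift_int : ∀ z : ℝ, Integrable (fun y => min (y - z) A) (P z))
    (hdrift : ∀ z : ℝ, ε ≤ ∫ y, min (y - z) A ∂(P z))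
    (y : ℝ) (hy : y ∈ Set.Ioc x (x + h)) :
    ∑' n : ℕ,
        (kIter0 (P.restrict (measurableSet_Iic : MeasurableSet (Set.Iic (x + h)))) n) y
          Set.univ
      ≤ ENNReal.ofReal ((A + h) / ε) :=
  stmt10_general P A ε x h hε hdrift_int hdrift y hy
end

section
/- Let Φ denote the standard normal cumulative distribution function and let b, h > 0. Then ∫₀^∞ [ Φ((h - z)/√(b z)) - Φ(-√(z/b)) ] dz = h. -/
/-!
For `z > 0`, `Φ((h - z)/√(bz)) - Φ(-√(z/b))` is the mass that the normal law with mean `z` and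
variance `bz` gives to `(0, h]`. By Tonelli the integral is therefore `∫₀ʰ ∫₀^∞ p(z, u) dz du`,
where `p(·, u)` is that normal density at `u`, and it suffices that `∫₀^∞ p(z, u) dz = 1` for
every `u > 0`. Substituting `z = v²` turns this into a Gaussian integral of the form
`∫₀^∞ exp(-(a v - c/v)²) dv`, which equals `√π / (2a)` by the Cauchy–Schlömilch (Glasser)
substitution `v ↦ (c/a)/v`.
-/

open Real MeasureTheory Set ProbabilityTheory
open scoped ENNReal NNReal

lemma image_const_div_Ioi_zero {k : ℝ} (hk : 0 < k) : (fun t : ℝ => k / t) '' Ioi 0 = Ioi 0 := by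
  ext x
  refine ⟨?_, fun hx => ⟨k / x, div_pos hk hx, by simp [hk.ne']⟩⟩
  rintro ⟨t, ht, rfl⟩
  exact div_pos hk ht

lemma image_sq_Ioi_zero : (fun v : ℝ => v ^ 2) '' Ioi 0 = Ioi 0 := by
  ext x
  refine ⟨?_, fun hx => ⟨√x, sqrt_pos.2 hx, sq_sqrt hx.le⟩⟩
  rintro ⟨v, hv : 0 < v, rfl⟩
  exact pow_pos hv 2

lemma lintegral_Ioi_comp_const_div {k : ℝ} (hk : 0 < k) (g : ℝ → ℝ≥0∞) :
    ∫⁻ t in Ioi 0, ENNReal.ofReal (k / t ^ 2) * g (k / t) = ∫⁻ v in Ioi 0, g v := by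
  have hderiv : ∀ t ∈ Ioi (0 : ℝ), HasDerivWithinAt (fun t => k / t) (-(k / t ^ 2)) (Ioi 0) t :=
    fun t ht => by
      simpa [div_eq_mul_inv] using ((hasDerivAt_inv (ne_of_gt ht)).const_mul k).hasDerivWithinAt
  have hanti : AntitoneOn (fun t : ℝ => k / t) (Ioi 0) :=
    fun s hs t _ hst => div_le_div_of_nonneg_left hk.le hs hst
  simpa [image_const_div_Ioi_zero hk] using
    (lintegral_image_eq_lintegral_deriv_mul_of_antitoneOn measurableSet_Ioi hderiv hanti g).symm

lemma lintegral_Ioi_comp_sq (g : ℝ → ℝ≥0∞) :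
    ∫⁻ v in Ioi 0, ENNReal.ofReal (2 * v) * g (v ^ 2) = ∫⁻ z in Ioi 0, g z := by
  have hderiv : ∀ v ∈ Ioi (0 : ℝ), HasDerivWithinAt (fun v => v ^ 2) (2 * v) (Ioi 0) v :=
    fun v _ => by simpa using (hasDerivAt_pow 2 v).hasDerivWithinAt
  have hmono : MonotoneOn (fun v : ℝ => v ^ 2) (Ioi 0) :=
    fun s hs t _ hst => pow_le_pow_left₀ hs.le hst 2
  simpa [image_sq_Ioi_zero] using
    (lintegral_image_eq_lintegral_deriv_mul_of_monotoneOn measurableSet_Ioi hderiv hmono g).symm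

section Glasser

variable {a c : ℝ}

lemma hasDerivAt_mul_sub_div (a c : ℝ) {v : ℝ} (hv : v ≠ 0) :
    HasDerivAt (fun v => a * v - c / v) (a + c / v ^ 2) v := by
  have h := ((hasDerivAt_id' v).const_mul a).sub ((hasDerivAt_inv hv).const_mul c)
  rw [show (fun y => a * y) - (fun y => c * y⁻¹) = fun v => a * v - c / v by
    funext; simp [div_eq_mul_inv]] at h
  exact h.congr_deriv (by ring)

lemma monotoneOn_mul_sub_div (ha : 0 ≤ a) (hc : 0 ≤ c) :
    MonotoneOn (fun v => a * v - c / v) (Ioi 0) := fun s hs t _ hst => by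
  have := div_le_div_of_nonneg_left hc hs hst
  have := mul_le_mul_of_nonneg_left hst ha
  dsimp only
  linarith

lemma image_mul_sub_div_Ioi_zero (ha : 0 < a) (hc : 0 < c) :
    (fun v => a * v - c / v) '' Ioi 0 = univ := by
  refine eq_univ_of_forall fun w => ?_
  -- the positive root of `a v ^ 2 - w v - c`
  set s := √(w ^ 2 + 4 * a * c)
  have hs : s ^ 2 = w ^ 2 + 4 * a * c := sq_sqrt (by positivity)
  have hws : 0 < w + s := by
    have : |w| < s := by
      rw [← sqrt_sq_eq_abs]; exact sqrt_lt_sqrt (sq_nonneg w) (by nlinarith [mul_pos ha hc])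
    linarith [neg_abs_le w]
  refine ⟨(w + s) / (2 * a), div_pos hws (by positivity), ?_⟩
  field_simp
  linear_combination hs

theorem lintegral_Ioi_comp_mul_sub_div_of_even (ha : 0 < a) (hc : 0 < c) {g : ℝ → ℝ≥0∞}
    (hg : Measurable g) (heven : ∀ x, g (-x) = g x) :
    ENNReal.ofReal (2 * a) * ∫⁻ v in Ioi 0, g (a * v - c / v) = ∫⁻ x, g x := by
  have hcov : ∫⁻ x, g x = ∫⁻ v in Ioi 0, ENNReal.ofReal (a + c / v ^ 2) * g (a * v - c / v) := by
    have h := lintegral_image_eq_lintegral_deriv_mul_of_monotoneOn measurableSet_Ioi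
      (fun v hv => (hasDerivAt_mul_sub_div a c (ne_of_gt hv)).hasDerivWithinAt)
      (monotoneOn_mul_sub_div ha.le hc.le) g
    rwa [image_mul_sub_div_Ioi_zero ha hc, Measure.restrict_univ] at h
  -- `v ↦ (c / a) / v` flips the sign of `a v - c / v` and swaps the two terms of its derivative
  have hswap : ∫⁻ v in Ioi 0, ENNReal.ofReal (c / v ^ 2) * g (a * v - c / v)
      = ∫⁻ v in Ioi 0, ENNReal.ofReal a * g (a * v - c / v) := by
    rw [← lintegral_Ioi_comp_const_div (div_pos hc ha)]
    refine setLIntegral_congr_fun measurableSet_Ioi fun t (ht : 0 < t) => ?_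
    have hflip : a * (c / a / t) - c / (c / a / t) = -(a * t - c / t) := by
      field_simp
      ring
    rw [hflip, heven, ← mul_assoc, ← ENNReal.ofReal_mul (by positivity)]
    congr 2
    field_simp
  have hmeas : Measurable fun v => ENNReal.ofReal a * g (a * v - c / v) := by fun_prop
  calc ENNReal.ofReal (2 * a) * ∫⁻ v in Ioi 0, g (a * v - c / v)
      = 2 * ∫⁻ v in Ioi 0, ENNReal.ofReal a * g (a * v - c / v) := by
        rw [lintegral_const_mul _ (by fun_prop), ENNReal.ofReal_mul zero_le_two,
          ENNReal.ofReal_ofNat, mul_assoc]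
    _ = ∫⁻ x, g x := by
        rw [hcov, two_mul]
        nth_rw 2 [← hswap]
        rw [← lintegral_add_left hmeas]
        refine setLIntegral_congr_fun measurableSet_Ioi fun v (hv : 0 < v) => ?_
        rw [← add_mul, ← ENNReal.ofReal_add ha.le (by positivity)]

lemma lintegral_Ioi_exp_neg_sq_mul_sub_div (ha : 0 < a) (hc : 0 < c) :
    ∫⁻ v in Ioi 0, ENNReal.ofReal (exp (-(a * v - c / v) ^ 2)) = ENNReal.ofReal (√π / (2 * a)) := by
  have hgauss : ∫⁻ x, ENNReal.ofReal (exp (-x ^ 2)) = ENNReal.ofReal √π := by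
    rw [← ofReal_integral_eq_lintegral_ofReal (by simpa using integrable_exp_neg_mul_sq one_pos)
      (ae_of_all _ fun x => (exp_pos _).le)]
    congr 1
    simpa using integral_gaussian 1
  have h := lintegral_Ioi_comp_mul_sub_div_of_even ha hc
    (g := fun x => ENNReal.ofReal (exp (-x ^ 2))) (by fun_prop) (by simp)
  rw [hgauss] at h
  rw [div_eq_mul_inv, mul_comm, ENNReal.ofReal_mul (by positivity), ← h, ← mul_assoc,
    ← ENNReal.ofReal_mul (by positivity), inv_mul_cancel₀ (by positivity), ENNReal.ofReal_one,
    one_mul]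

end Glasser

lemma gaussianPDFReal_zero_one (x : ℝ) :
    gaussianPDFReal 0 1 x = (√(2 * π))⁻¹ * exp (-(x ^ 2) / 2) := by
  simp [gaussianPDFReal]

lemma gaussianPDFReal_eq_inv_sqrt_mul {m : ℝ} {v : ℝ≥0} (hv : v ≠ 0) (u : ℝ) :
    gaussianPDFReal m v u = (√v)⁻¹ * gaussianPDFReal 0 1 (u / √v - m / √v) := by
  have hv' : (0 : ℝ) < v := by positivity
  rw [gaussianPDFReal, gaussianPDFReal_zero_one, sqrt_mul (by positivity), div_sub_div_same,
    div_pow, sq_sqrt hv'.le]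
  field_simp

lemma integral_Iic_sub_integral_Iic_gaussianPDFReal (m : ℝ) {v : ℝ≥0} (hv : v ≠ 0) (α β : ℝ) :
    (∫ s in Iic ((β - m) / √v), gaussianPDFReal 0 1 s)
        - ∫ s in Iic ((α - m) / √v), gaussianPDFReal 0 1 s
      = ∫ u in α..β, gaussianPDFReal m v u := by
  have hσ : 0 < √(v : ℝ) := sqrt_pos.2 (by positivity)
  simp_rw [gaussianPDFReal_eq_inv_sqrt_mul hv, intervalIntegral.integral_const_mul,
    intervalIntegral.integral_comp_div_sub _ hσ.ne', smul_eq_mul, inv_mul_cancel_left₀ hσ.ne',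
    sub_div]
  exact intervalIntegral.integral_Iic_sub_Iic (integrable_gaussianPDFReal 0 1).integrableOn
    (integrable_gaussianPDFReal 0 1).integrableOn

theorem lintegral_Ioi_gaussianPDF_var_mul_mean {b u : ℝ} (hb : 0 < b) (hu : 0 < u) :
    ∫⁻ z in Ioi 0, gaussianPDF z (b * z).toNNReal u = 1 := by
  set s := √(2 * b)
  have hs : 0 < s := sqrt_pos.2 (by positivity)
  have hs2 : s ^ 2 = 2 * b := sq_sqrt (by positivity)
  have hpt : ∀ v ∈ Ioi (0 : ℝ), ENNReal.ofReal (2 * v) * gaussianPDF (v ^ 2) (b * v ^ 2).toNNReal u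
      = ENNReal.ofReal (2 * (√π * s)⁻¹) * ENNReal.ofReal (exp (-(s⁻¹ * v - u / s / v) ^ 2)) := by
    intro v (hv : 0 < v)
    have hvar : √(2 * π * (b * v ^ 2)) = √π * s * v := by
      rw [show 2 * π * (b * v ^ 2) = (√π * s * v) ^ 2 by
        rw [mul_pow, mul_pow, sq_sqrt pi_pos.le, hs2]; ring, sqrt_sq (by positivity)]
    rw [gaussianPDF, gaussianPDFReal, Real.coe_toNNReal _ (by positivity), hvar,
      ← ENNReal.ofReal_mul (by positivity), ← ENNReal.ofReal_mul (by positivity)]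
    congr 1
    field_simp
    rw [hs2]
    ring_nf
  rw [← lintegral_Ioi_comp_sq, setLIntegral_congr_fun measurableSet_Ioi hpt,
    lintegral_const_mul _ (by fun_prop),
    lintegral_Ioi_exp_neg_sq_mul_sub_div (inv_pos.2 hs) (div_pos hu hs),
    ← ENNReal.ofReal_mul (by positivity), ← ENNReal.ofReal_one]
  congr 1
  field_simp

theorem integral_integral_eq_measureReal_of_lintegral_eq_one {α β : Type*} [MeasurableSpace α]
    [MeasurableSpace β] {μ : Measure α} {ν : Measure β} [SFinite μ] [SFinite ν]
    {K : α → β → ℝ} (hK : Measurable (Function.uncurry K)) (hK0 : ∀ x y, 0 ≤ K x y)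
    (hint : ∀ x, Integrable (K x) ν) (h1 : ∀ᵐ y ∂ν, ∫⁻ x, ENNReal.ofReal (K x y) ∂μ = 1) :
    ∫ x, ∫ y, K x y ∂ν ∂μ = ν.real univ := by
  rw [integral_eq_lintegral_of_nonneg_ae (ae_of_all _ fun x => integral_nonneg (hK0 x))
      hK.stronglyMeasurable.integral_prod_right'.aestronglyMeasurable,
    lintegral_congr fun x => ofReal_integral_eq_lintegral_ofReal (hint x) (ae_of_all _ (hK0 x)),
    lintegral_lintegral_swap hK.ennreal_ofReal.aemeasurable, lintegral_congr_ae h1,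
    lintegral_one, measureReal_def]

/-- With `Φ` the standard normal cumulative distribution function and `b, h > 0`:
`∫₀^∞ [Φ((h-z)/√(bz)) - Φ(-√(z/b))] dz = h`. -/
theorem stmt14 (b h : ℝ) (hb : 0 < b) (hh : 0 < h)
    (Φ : ℝ → ℝ)
    (hΦ : ∀ t, Φ t = ∫ s in Set.Iic t, (Real.sqrt (2 * Real.pi))⁻¹ * Real.exp (-(s ^ 2) / 2)) :
    ∫ z in Set.Ioi (0 : ℝ),
        (Φ ((h - z) / Real.sqrt (b * z)) - Φ (-Real.sqrt (z / b))) = h := by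
  simp_rw [← gaussianPDFReal_zero_one] at hΦ
  have hslice : ∀ z ∈ Ioi (0 : ℝ), Φ ((h - z) / √(b * z)) - Φ (-√(z / b))
      = ∫ u in Ioc 0 h, gaussianPDFReal z (b * z).toNNReal u := by
    intro z (hz : 0 < z)
    have hsd : √(b * z) = √((b * z).toNNReal : ℝ) := by
      rw [Real.coe_toNNReal _ (by positivity)]
    have hmean : -√(z / b) = (0 - z) / √(b * z) := by
      rw [zero_sub, neg_div, neg_inj, eq_div_iff (by positivity), ← sqrt_mul (by positivity),
        show z / b * (b * z) = z ^ 2 by field_simp, sqrt_sq hz.le]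
    rw [hmean, hΦ, hΦ, hsd, integral_Iic_sub_integral_Iic_gaussianPDFReal z (by positivity),
      intervalIntegral.integral_of_le hh.le]
  rw [setIntegral_congr_fun measurableSet_Ioi hslice,
    integral_integral_eq_measureReal_of_lintegral_eq_one
      (K := fun z u => gaussianPDFReal z (b * z).toNNReal u) (by unfold gaussianPDFReal; fun_prop)
      (fun _ _ => gaussianPDFReal_nonneg _ _ _)
      (fun _ => (integrable_gaussianPDFReal _ _).integrableOn)
      (ae_restrict_of_forall_mem measurableSet_Ioc fun u hu =>
        lintegral_Ioi_gaussianPDF_var_mul_mean hb hu.1)]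
  simp [hh.le]
end

section
/- For the reflected random walk X_{n+1} = |X_n + η_{n+1}| on ℝ≥0, the jump from state x ≥ 0 satisfies the deterministic identity |x + η| - x = η - 2·min(x+η, 0) = η + 2(x+η)⁻ for every real η, where a⁻ = max(-a, 0). Consequently, if E η = 0, E η² < ∞, and 0 < s < x, then the truncated first moment m₁^{[s]}(x) := E[(|x+η| - x)·1{| |x+η| - x | ≤ s}] satisfies |m₁^{[s]}(x)| ≤ 2·E[|η| ; |η| > s]. -/
open MeasureTheory

/-!
Write `g = |x + η| - x`. Since `|g| ≤ |η|`, and `g = η` wherever `|η| ≤ s ≤ x` (no reflection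
happens there), the set `{|g| ≤ s}` splits into `S = {|η| ≤ s}`, where the integrand is `η`,
and a remainder inside `Sᶜ`. Because `E η = 0`, the integral of `η` over `S` is minus its
integral over `Sᶜ`, so each of the two pieces is bounded by `E[|η| ; |η| > s]`.
-/

lemma abs_add_sub_eq_sub_two_mul_min (x e : ℝ) : |x + e| - x = e - 2 * min (x + e) 0 := by
  rcases le_or_gt 0 (x + e) with h | h
  · rw [abs_of_nonneg h, min_eq_right h]; ring
  · rw [abs_of_neg h, min_eq_left h.le]; ring

lemma abs_add_sub_eq_add_two_mul_max_neg (x e : ℝ) :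
    |x + e| - x = e + 2 * max (-(x + e)) 0 := by
  have h := max_neg_neg (x + e) 0
  rw [neg_zero] at h
  rw [abs_add_sub_eq_sub_two_mul_min, h]
  ring

lemma abs_abs_add_sub_le {x : ℝ} (hx : 0 ≤ x) (e : ℝ) : |(|x + e| - x)| ≤ |e| := by
  simpa [abs_of_nonneg hx] using abs_abs_sub_abs_le_abs_sub (x + e) x

lemma abs_add_sub_eq_of_abs_le {x e : ℝ} (he : |e| ≤ x) : |x + e| - x = e := by
  rw [abs_of_nonneg (by linarith [neg_abs_le e])]
  ring

section

variable {Ω : Type*} [MeasurableSpace Ω] {μ : Measure Ω} {η : Ω → ℝ}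

lemma abs_setIntegral_le_setIntegral_compl_abs (hη : Integrable η μ) (hmean : ∫ ω, η ω ∂μ = 0)
    {S : Set Ω} (hS : MeasurableSet S) : |∫ ω in S, η ω ∂μ| ≤ ∫ ω in Sᶜ, |η ω| ∂μ := by
  have hsum := integral_add_compl hS hη
  rw [hmean, add_eq_zero_iff_eq_neg] at hsum
  rw [hsum, abs_neg]
  exact abs_integral_le_integral_abs

lemma abs_truncatedMean_le_two_mul_tail (hη_meas : Measurable η) (hη : Integrable η μ)
    (hmean : ∫ ω, η ω ∂μ = 0) {g : Ω → ℝ} (hg_meas : AEStronglyMeasurable g μ)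
    (hg_le : ∀ ω, |g ω| ≤ |η ω|) {s : ℝ} (hg_eq : ∀ ω, |η ω| ≤ s → g ω = η ω) :
    |∫ ω in {ω | |g ω| ≤ s}, g ω ∂μ| ≤ 2 * ∫ ω in {ω | s < |η ω|}, |η ω| ∂μ := by
  set S := {ω | |η ω| ≤ s}
  set A := {ω | |g ω| ≤ s}
  have hS : MeasurableSet S := measurableSet_le hη_meas.abs measurable_const
  have hg : Integrable g μ :=
    hη.mono hg_meas (ae_of_all _ fun ω => by simpa only [Real.norm_eq_abs] using hg_le ω)
  have hSA : S ⊆ A := fun ω (hω : |η ω| ≤ s) => show |g ω| ≤ s by rwa [hg_eq ω hω]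
  have htail : {ω | s < |η ω|} = Sᶜ := by ext; simp [S]
  have hsplit : ∫ ω in A, g ω ∂μ = ∫ ω in S, η ω ∂μ + ∫ ω in A \ S, g ω ∂μ := by
    rw [← integral_inter_add_sdiff hS hg.integrableOn, Set.inter_eq_right.mpr hSA,
      setIntegral_congr_fun hS hg_eq]
  have hrest : |∫ ω in A \ S, g ω ∂μ| ≤ ∫ ω in Sᶜ, |η ω| ∂μ :=
    calc |∫ ω in A \ S, g ω ∂μ| ≤ ∫ ω in A \ S, |g ω| ∂μ := abs_integral_le_integral_abs
      _ ≤ ∫ ω in A \ S, |η ω| ∂μ :=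
          setIntegral_mono hg.abs.integrableOn hη.abs.integrableOn hg_le
      _ ≤ ∫ ω in Sᶜ, |η ω| ∂μ :=
          setIntegral_mono_set hη.abs.integrableOn (ae_of_all _ fun ω => abs_nonneg _)
            (Set.sdiff_subset_compl A S).eventuallyLE
  rw [htail, hsplit]
  linarith [abs_add_le (∫ ω in S, η ω ∂μ) (∫ ω in A \ S, g ω ∂μ),
    abs_setIntegral_le_setIntegral_compl_abs hη hmean hS]

end

theorem stmt16_general {Ω : Type*} [MeasurableSpace Ω] (μ : Measure Ω)
    (η : Ω → ℝ) (hη_meas : Measurable η)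
    (hη_int : Integrable η μ)
    (hmean : ∫ ω, η ω ∂μ = 0)
    (x s : ℝ) (hs : 0 < s) (hsx : s < x) :
    (∀ x' e : ℝ, 0 ≤ x' → |x' + e| - x' = e - 2 * min (x' + e) 0 ∧
        |x' + e| - x' = e + 2 * max (-(x' + e)) 0) ∧
      |∫ ω in {ω | |(|x + η ω| - x)| ≤ s}, (|x + η ω| - x) ∂μ|
        ≤ 2 * ∫ ω in {ω | s < |η ω|}, |η ω| ∂μ := by
  refine ⟨fun x' e _ => ⟨abs_add_sub_eq_sub_two_mul_min x' e,
    abs_add_sub_eq_add_two_mul_max_neg x' e⟩, ?_⟩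
  exact abs_truncatedMean_le_two_mul_tail hη_meas hη_int hmean
    ((measurable_const.add hη_meas).abs.sub measurable_const).aestronglyMeasurable
    (fun ω => abs_abs_add_sub_le (hs.trans hsx).le (η ω))
    fun ω hω => abs_add_sub_eq_of_abs_le (hω.trans hsx.le)

/-- For the reflected random walk `X_{n+1} = |X_n + η|`: the jump identity
`|x+η| - x = η - 2 min(x+η, 0) = η + 2 (x+η)⁻` holds for all `x ≥ 0`, `η ∈ ℝ`;
and if `E η = 0`, `E η² < ∞` and `0 < s < x`, then the truncated first moment
satisfies `|m₁^{[s]}(x)| ≤ 2 E[|η| ; |η| > s]`. -/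
theorem stmt16 {Ω : Type*} [MeasurableSpace Ω] (μ : Measure Ω) [IsProbabilityMeasure μ]
    (η : Ω → ℝ) (hη_meas : Measurable η)
    (hη_int : Integrable η μ) (hη_sq : Integrable (fun ω => η ω ^ 2) μ)
    (hmean : ∫ ω, η ω ∂μ = 0)
    (x s : ℝ) (hs : 0 < s) (hsx : s < x) :
    (∀ x' e : ℝ, 0 ≤ x' → |x' + e| - x' = e - 2 * min (x' + e) 0 ∧
        |x' + e| - x' = e + 2 * max (-(x' + e)) 0) ∧
      |∫ ω in {ω | |(|x + η ω| - x)| ≤ s}, (|x + η ω| - x) ∂μ|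
        ≤ 2 * ∫ ω in {ω | s < |η ω|}, |η ω| ∂μ :=
  stmt16_general μ η hη_meas hη_int hmean x s hs hsx
end
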